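/- Let A_Γ be a right-angled Artin group, a, x generators with a ≥ x, a ≠ x, and Y a union of connected components of Γ − st(x) not containing a. Then τ_{a,x} c_{x,Y} τ_{a,x}^{-1} = c_{x,Y} c_{a,Y}, where τ_{a,x} is the transvection x ↦ xa and c_{z,Y} is the partial conjugation of Y by z. -/

import Mathlib

open scoped commutatorElement in
/-- The defining relators of the right-angled Artin group of a simplicial graph `Γ`. -/
def raagRels {V : Type*} (Γ : SimpleGraph V) : Set (FreeGroup V) :=
  {r | ∃ x y : V, Γ.Adj x y ∧ r = ⁅FreeGroup.of x, FreeGroup.of y⁆}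

/-- The right-angled Artin group `A_Γ` of a simplicial graph `Γ`. -/
abbrev RAAG {V : Type*} (Γ : SimpleGraph V) : Type _ := PresentedGroup (raagRels Γ)

/-- The generator of `A_Γ` corresponding to a vertex `v`. -/
def raagGen {V : Type*} (Γ : SimpleGraph V) (v : V) : RAAG Γ := PresentedGroup.of v

/-- Domination: `a ≥ b` iff `lk(b) ⊆ st(a)`. -/
def Dominates {V : Type*} (Γ : SimpleGraph V) (a b : V) : Prop :=
  ∀ v : V, Γ.Adj b v → (v = a ∨ Γ.Adj a v)

theorem PresentedGroup.mulAut_ext {α : Type*} {rels : Set (FreeGroup α)}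
    {f g : MulAut (PresentedGroup rels)} (h : ∀ v, f (.of v) = g (.of v)) : f = g :=
  MulEquiv.toMonoidHom_injective (PresentedGroup.ext h)

theorem stmt9_general {V : Type*} (Γ : SimpleGraph V) (a x : V)
    (Y : Set V)
    (hYst : ∀ y ∈ Y, y ≠ x ∧ ¬ Γ.Adj x y)
    (haY : a ∉ Y)
    (τ cx ca : MulAut (RAAG Γ))
    (hτ1 : τ (raagGen Γ x) = raagGen Γ x * raagGen Γ a)
    (hτ2 : ∀ v : V, v ≠ x → τ (raagGen Γ v) = raagGen Γ v)
    (hcx1 : ∀ y ∈ Y, cx (raagGen Γ y) = (raagGen Γ x)⁻¹ * raagGen Γ y * raagGen Γ x)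
    (hcx2 : ∀ v : V, v ∉ Y → cx (raagGen Γ v) = raagGen Γ v)
    (hca1 : ∀ y ∈ Y, ca (raagGen Γ y) = (raagGen Γ a)⁻¹ * raagGen Γ y * raagGen Γ a)
    (hca2 : ∀ v : V, v ∉ Y → ca (raagGen Γ v) = raagGen Γ v) :
    τ * cx * τ⁻¹ = cx * ca := by
  have hxY : x ∉ Y := fun h => (hYst x h).1 rfl
  refine mul_inv_eq_of_eq_mul (PresentedGroup.mulAut_ext fun v => ?_)
  change τ (cx (raagGen Γ v)) = cx (ca (τ (raagGen Γ v)))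
  by_cases hvY : v ∈ Y
  · have hvx : v ≠ x := (hYst v hvY).1
    -- both sides conjugate `v` by `x * a`
    simp only [hcx1 v hvY, hτ2 v hvx, hca1 v hvY, map_mul, map_inv, hτ1, hcx2 a haY]
    group
  · rcases eq_or_ne v x with rfl | hvx
    · simp only [hτ1, map_mul, hcx2 v hxY, hca2 v hxY, hca2 a haY, hcx2 a haY]
    · simp only [hcx2 v hvY, hτ2 v hvx, hca2 v hvY]

/-- if `a ≥ x`, `a ≠ x`, and `Y` is a union of connected components of
`Γ - st(x)` not containing `a`, then `τ_{a,x} ∘ c_{x,Y} ∘ τ_{a,x}⁻¹ = c_{x,Y} ∘ c_{a,Y}`,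
where `τ_{a,x} : x ↦ xa` and `c_{z,Y}` is the partial conjugation of `Y` by `z`. -/
theorem stmt9 {V : Type*} (Γ : SimpleGraph V) (a x : V)
    (hdom : Dominates Γ a x) (hax : a ≠ x)
    (Y : Set V)
    (hYst : ∀ y ∈ Y, y ≠ x ∧ ¬ Γ.Adj x y)
    (hYcomp : ∀ y ∈ Y, ∀ z : V, Γ.Adj y z → (z = x ∨ Γ.Adj x z ∨ z ∈ Y))
    (haY : a ∉ Y)
    (τ cx ca : MulAut (RAAG Γ))
    (hτ1 : τ (raagGen Γ x) = raagGen Γ x * raagGen Γ a)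
    (hτ2 : ∀ v : V, v ≠ x → τ (raagGen Γ v) = raagGen Γ v)
    (hcx1 : ∀ y ∈ Y, cx (raagGen Γ y) = (raagGen Γ x)⁻¹ * raagGen Γ y * raagGen Γ x)
    (hcx2 : ∀ v : V, v ∉ Y → cx (raagGen Γ v) = raagGen Γ v)
    (hca1 : ∀ y ∈ Y, ca (raagGen Γ y) = (raagGen Γ a)⁻¹ * raagGen Γ y * raagGen Γ a)
    (hca2 : ∀ v : V, v ∉ Y → ca (raagGen Γ v) = raagGen Γ v) :
    τ * cx * τ⁻¹ = cx * ca :=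
  stmt9_general Γ a x Y hYst haY τ cx ca hτ1 hτ2 hcx1 hcx2 hca1 hca2
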